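/- arXiv:1802.01973 — 4 statements merged into one kernel-verified Lean document; each statement's English description precedes it below -/
import Mathlib

section
/- Let W ∈ L(H) be a positive operator, S ⊆ H a closed subspace, and T the shorted operator of W to S. Then M(W, ker T) = M(W, S), i.e. an operator X ∈ L(H) satisfies 0 ≤ X ≤ W and range X ⊆ (ker T)^⊥ if and only if 0 ≤ X ≤ W and range X ⊆ S^⊥. -/
open ContinuousLinearMap
open scoped ComplexInnerProductSpace

noncomputable section

variable {H : Type*} [NormedAddCommGroup H] [InnerProductSpace ℂ H] [CompleteSpace H]

/-- `M(W,S)`: the set of operators `X` with `0 ≤ X ≤ W` (Loewner order) and `range X ⊆ S^⊥`. -/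
def MSet (W : H →L[ℂ] H) (S : Submodule ℂ H) : Set (H →L[ℂ] H) :=
  {X | X.IsPositive ∧ (W - X).IsPositive ∧ LinearMap.range (X : H →ₗ[ℂ] H) ≤ Sᗮ}

/-- `T` is the shorted operator of `W` to `S`, i.e. the maximum of `M(W,S)` in the Loewner
order. -/
def IsShorted (W : H →L[ℂ] H) (S : Submodule ℂ H) (T : H →L[ℂ] H) : Prop :=
  T ∈ MSet W S ∧ ∀ X ∈ MSet W S, (T - X).IsPositive

/-- The minus order: `A ⁻≤ B` iff there are bounded idempotents `P, Q` with `A = PB` and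
`A* = QB*`. -/
def MinusLE (A B : H →L[ℂ] H) : Prop :=
  ∃ P Q : H →L[ℂ] H, IsIdempotentElem P ∧ IsIdempotentElem Q ∧
    A = P ∘L B ∧ adjoint A = Q ∘L adjoint B

/-- The pair `(W, N)` is compatible: there is a bounded idempotent `Q` with range `N` such that
`WQ` is selfadjoint. -/
def Compatible (W : H →L[ℂ] H) (N : Submodule ℂ H) : Prop :=
  ∃ Q : H →L[ℂ] H, IsIdempotentElem Q ∧ LinearMap.range (Q : H →ₗ[ℂ] H) = N ∧ IsSelfAdjoint (W ∘L Q)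

/-- `M⁻(W,S)`: operators `X` with `X ⁻≤ W`, `range X ⊆ S^⊥` and `range X* ⊆ S^⊥`. -/
def MMinusSet (W : H →L[ℂ] H) (S : Submodule ℂ H) : Set (H →L[ℂ] H) :=
  {X | MinusLE X W ∧ LinearMap.range (X : H →ₗ[ℂ] H) ≤ Sᗮ ∧ LinearMap.range (adjoint X : H →ₗ[ℂ] H) ≤ Sᗮ}

/-- `X₀` is a `W`-inverse of `M` in `R(C)`: for every `x`, `X₀ x` is a `W`-weighted least squares
solution of `M z = C x`. -/
def WInverseIn (W M C X₀ : H →L[ℂ] H) : Prop :=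
  ∀ x z : H, (⟪W (M (X₀ x) - C x), M (X₀ x) - C x⟫).re ≤ (⟪W (M z - C x), M z - C x⟫).re

/-- The left weighted star order `A ₋*_W≤ B`. -/
def LStarW (W A B : H →L[ℂ] H) : Prop :=
  LinearMap.range (B : H →ₗ[ℂ] H) = LinearMap.range (A : H →ₗ[ℂ] H) ⊔ LinearMap.range (B - A : H →ₗ[ℂ] H) ∧
  LinearMap.range (A : H →ₗ[ℂ] H) ⊓ LinearMap.range (B - A : H →ₗ[ℂ] H) = ⊥ ∧
  LinearMap.range (B - A : H →ₗ[ℂ] H) ≤ LinearMap.ker (adjoint A ∘L W : H →ₗ[ℂ] H)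

/-- The right weighted star order `A ≤*_W B`. -/
def RStarW (W A B : H →L[ℂ] H) : Prop :=
  LinearMap.range (adjoint B : H →ₗ[ℂ] H) =
    LinearMap.range (adjoint A : H →ₗ[ℂ] H) ⊔ LinearMap.range (adjoint B - adjoint A : H →ₗ[ℂ] H) ∧
  LinearMap.range (adjoint A : H →ₗ[ℂ] H) ⊓ LinearMap.range (adjoint B - adjoint A : H →ₗ[ℂ] H) = ⊥ ∧
  LinearMap.range (adjoint B - adjoint A : H →ₗ[ℂ] H) ≤ LinearMap.ker (A ∘L W : H →ₗ[ℂ] H)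

/-- The weighted star order `A *_W≤ B`. -/
def StarW (W A B : H →L[ℂ] H) : Prop :=
  LStarW W A B ∧ RStarW W A B

/-!
For a selfadjoint `X`, `range X ⊆ Nᗮ` iff `N ⊆ ker X`, so both sets are the operators `0 ≤ X ≤ W`
whose kernel contains the relevant subspace. Since `T ∈ M(W,S)`, `S ⊆ ker T`. Conversely, every
`X ∈ M(W,S)` satisfies `0 ≤ X ≤ T` by maximality of `T`, and then `T x = 0` forces
`⟪X x, x⟫ = 0`, hence `X x = 0`: `ker T ⊆ ker X`.
-/

open scoped ComplexOrder

namespace ContinuousLinearMap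

variable {E : Type*} [NormedAddCommGroup E] [InnerProductSpace ℂ E] [CompleteSpace E]

/-- Writing a positive `X` as `s† s`, the form `⟪X x, x⟫` is `‖s x‖²`. -/
theorem IsPositive.apply_eq_zero_of_inner_self_eq_zero {X : E →L[ℂ] E} (hX : X.IsPositive)
    {x : E} (h : ⟪X x, x⟫ = 0) : X x = 0 := by
  obtain ⟨s, rfl⟩ := CStarAlgebra.nonneg_iff_eq_star_mul_self.mp ((nonneg_iff_isPositive X).mpr hX)
  have hsx : s x = 0 := by
    rwa [star_eq_adjoint, mul_apply_eq_comp, adjoint_inner_left, inner_self_eq_zero] at h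
  simp [hsx]

theorem IsPositive.ker_le_ker_of_isPositive_sub {X T : E →L[ℂ] E} (hX : X.IsPositive)
    (hTX : (T - X).IsPositive) :
    LinearMap.ker (T : E →ₗ[ℂ] E) ≤ LinearMap.ker (X : E →ₗ[ℂ] E) := by
  intro x hx
  rw [LinearMap.mem_ker, coe_coe] at hx ⊢
  have hform : ⟪(T - X) x, x⟫ = -⟪X x, x⟫ := by simp [hx]
  have hXx : ⟪X x, x⟫ ≤ 0 := by
    simpa only [hform, neg_nonneg] using hTX.inner_nonneg_left x
  exact hX.apply_eq_zero_of_inner_self_eq_zero (le_antisymm hXx (hX.inner_nonneg_left x))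

end ContinuousLinearMap

theorem LinearMap.IsSymmetric.range_le_orthogonal_iff {𝕜 E : Type*} [RCLike 𝕜]
    [NormedAddCommGroup E] [InnerProductSpace 𝕜 E] {X : E →ₗ[𝕜] E} (hX : X.IsSymmetric)
    {S : Submodule 𝕜 E} : LinearMap.range X ≤ Sᗮ ↔ S ≤ LinearMap.ker X := by
  rw [← Submodule.isOrtho_iff_le, Submodule.isOrtho_comm, Submodule.isOrtho_iff_le,
    hX.orthogonal_range]

section MSet

variable {E : Type*} [NormedAddCommGroup E] [InnerProductSpace ℂ E]

theorem mem_MSet_iff {W X : E →L[ℂ] E} {S : Submodule ℂ E} :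
    X ∈ MSet W S ↔ X.IsPositive ∧ (W - X).IsPositive ∧ S ≤ LinearMap.ker (X : E →ₗ[ℂ] E) :=
  and_congr_right fun hX => and_congr_right fun _ => hX.isSymmetric.range_le_orthogonal_iff

theorem MSet_antitone (W : E →L[ℂ] E) : Antitone (MSet W) :=
  fun _ _ h _ hX => mem_MSet_iff.mpr <| (mem_MSet_iff.mp hX).imp_right (.imp_right h.trans)

theorem IsShorted.le_ker {W T : E →L[ℂ] E} {S : Submodule ℂ E} (hT : IsShorted W S T) :
    S ≤ LinearMap.ker (T : E →ₗ[ℂ] E) :=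
  (mem_MSet_iff.mp hT.1).2.2

end MSet

theorem stmt0_general (W T : H →L[ℂ] H) (S : Submodule ℂ H) (hT : IsShorted W S T) :
    MSet W (LinearMap.ker (T : H →ₗ[ℂ] H)) = MSet W S := by
  refine (MSet_antitone W hT.le_ker).antisymm fun X hX => ?_
  obtain ⟨hXpos, hWX, -⟩ := mem_MSet_iff.mp hX
  exact mem_MSet_iff.mpr ⟨hXpos, hWX, hXpos.ker_le_ker_of_isPositive_sub (hT.2 X hX)⟩

/-- `M(W, ker T) = M(W, S)` for the shorted operator `T` of `W` to `S`. -/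
theorem stmt0 (W T : H →L[ℂ] H) (S : Submodule ℂ H) (hS : IsClosed (S : Set H))
    (hW : W.IsPositive) (hT : IsShorted W S T) :
    MSet W (LinearMap.ker (T : H →ₗ[ℂ] H)) = MSet W S :=
  stmt0_general W T S hT
end
end

section
/- Let W ∈ L(H) be a positive operator, S ⊆ H a closed subspace, T the shorted operator of W to S, and W^{1/2} the unique positive square root of W. Then the pair (W, S) is compatible if and only if T ⁻≤ W (minus order) and W^{1/2}(S) is closed in range W^{1/2}, i.e. W^{1/2}(S) = closure(W^{1/2}(S)) ∩ range(W^{1/2}). -/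
open ContinuousLinearMap
open scoped ComplexInnerProductSpace

noncomputable section

variable {H : Type*} [NormedAddCommGroup H] [InnerProductSpace ℂ H] [CompleteSpace H]

/-!
Write `R = W^{1/2}` and `L = R(S)`. The shorted operator is `T = R P R`, where `P` is the
orthogonal projection onto `Lᗮ` (Anderson–Trapp): every `X ∈ M(W,S)` satisfies
`re ⟪X x, x⟫ ≤ ‖R x - R s‖²` for `s ∈ S`, while `re ⟪T x, x⟫` is the squared distance from `R x`
to `L`. Compatibility of `(W, S)` amounts to `H = S + W⁻¹(Sᗮ)`.

If `Q` is a projection onto `S` with `W Q` selfadjoint, then `T = W (1 - Q) = (1 - Q)* W`, so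
`T ⁻≤ W`; and if `R x` lies in the closure of `L`, the decomposition `x = s + n` with
`R n ∈ Lᗮ` forces `R x = R s`. Conversely, `T ⁻≤ W` gives `T = W G`, and since `R` is injective on
the closure of its range, the projection of `R x` onto the closure of `L` is `R (x - G x)`. It thus
lies in `range R`, hence in `L` by the closedness hypothesis; writing it as `R s` exhibits
`x - s ∈ W⁻¹(Sᗮ)`.
-/

section

variable {E : Type*} [NormedAddCommGroup E] [InnerProductSpace ℂ E]

theorem IsShorted.unique {W T T' : E →L[ℂ] E} {S : Submodule ℂ E} (hT : IsShorted W S T)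
    (hT' : IsShorted W S T') : T = T' :=
  IsGreatest.unique hT hT'

theorem apply_eq_zero_of_mem_mSet {W X : E →L[ℂ] E} {S : Submodule ℂ E} (hX : X ∈ MSet W S)
    {s : E} (hs : s ∈ S) : X s = 0 := by
  rw [← inner_self_eq_zero (𝕜 := ℂ), hX.1.inner_left_eq_inner_right]
  exact (Submodule.mem_orthogonal S _).mp (hX.2.2 ⟨X s, rfl⟩) s hs

variable [CompleteSpace E] {W R : E →L[ℂ] E} {S : Submodule ℂ E}

theorem apply_mem_orthogonal_map_iff (hR : IsSelfAdjoint R) (hRW : R ∘L R = W) {x : E} :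
    R x ∈ (S.map (R : E →ₗ[ℂ] E))ᗮ ↔ W x ∈ Sᗮ := by
  simp only [Submodule.mem_orthogonal, Submodule.mem_map, forall_exists_index, and_imp,
    forall_apply_eq_imp_iff₂]
  refine forall₂_congr fun s _ => ?_
  rw [← hRW, comp_apply, coe_coe, ← adjoint_inner_right, hR.adjoint_eq]

theorem re_inner_le_norm_sq_of_mem_mSet {X : E →L[ℂ] E} (hX : X ∈ MSet W S)
    (hR : IsSelfAdjoint R) (hRW : R ∘L R = W) (x : E) {s : E} (hs : s ∈ S) :
    RCLike.re ⟪X x, x⟫ ≤ ‖R x - R s‖ ^ 2 := by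
  have hXs := apply_eq_zero_of_mem_mSet hX hs
  calc RCLike.re ⟪X x, x⟫ = RCLike.re ⟪X (x - s), x - s⟫ := by
        rw [map_sub, hXs, sub_zero, inner_sub_right, hX.1.inner_left_eq_inner_right x s, hXs,
          inner_zero_right, sub_zero]
    _ ≤ RCLike.re ⟪W (x - s), x - s⟫ := by
        have := hX.2.1.re_inner_nonneg_left (x - s)
        rw [sub_apply, inner_sub_left, map_sub] at this
        linarith
    _ = ‖R x - R s‖ ^ 2 := by
        rw [← hRW, comp_apply, ← adjoint_inner_right, hR.adjoint_eq, inner_self_eq_norm_sq, map_sub]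

theorem isShorted_comp_starProjection_orthogonal_map (hR : IsSelfAdjoint R) (hRW : R ∘L R = W) :
    IsShorted W S (R ∘L (S.map (R : E →ₗ[ℂ] E))ᗮ.starProjection ∘L R) := by
  set L := S.map (R : E →ₗ[ℂ] E)
  have hconj (K : Submodule ℂ E) [K.HasOrthogonalProjection] :
      (R ∘L K.starProjection ∘L R).IsPositive := by
    simpa [hR.adjoint_eq] using
      (IsPositive.of_isStarProjection isStarProjection_starProjection).adjoint_conj R
  have hsub : W - R ∘L Lᗮ.starProjection ∘L R = R ∘L Lᗮᗮ.starProjection ∘L R := by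
    rw [Lᗮ.starProjection_orthogonal', ← hRW]
    ext x
    simp
  refine ⟨⟨hconj _, hsub ▸ hconj _, ?_⟩, fun X hX => ?_⟩
  · rintro _ ⟨x, rfl⟩
    rw [Submodule.mem_orthogonal]
    intro s hs
    change ⟪s, R (Lᗮ.starProjection (R x))⟫ = 0
    rw [← hR.adjoint_eq, adjoint_inner_right, hR.adjoint_eq]
    exact Submodule.inner_right_of_mem_orthogonal (Submodule.mem_map_of_mem hs)
      (Submodule.starProjection_apply_mem _ _)
  rw [isPositive_def']
  refine ⟨(hconj _).isSelfAdjoint.sub hX.1.isSelfAdjoint, fun x => ?_⟩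
  rw [reApplyInnerSelf_apply, sub_apply, inner_sub_left, map_sub, sub_nonneg]
  have hmem : Lᗮᗮ.starProjection (R x) ∈ closure (L : Set E) := by
    rw [← Submodule.topologicalClosure_coe, ← Submodule.orthogonal_orthogonal_eq_closure]
    exact Submodule.starProjection_apply_mem _ _
  have hle : ∀ m ∈ closure (L : Set E), RCLike.re ⟪X x, x⟫ ≤ ‖R x - m‖ ^ 2 :=
    closure_minimal
      (by rintro _ ⟨s, hs, rfl⟩; exact re_inner_le_norm_sq_of_mem_mSet hX hR hRW x hs)
      (isClosed_le continuous_const ((continuous_const.sub continuous_id).norm.pow 2))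
  calc RCLike.re ⟪X x, x⟫ ≤ ‖R x - Lᗮᗮ.starProjection (R x)‖ ^ 2 := hle _ hmem
    _ = ‖Lᗮ.starProjection (R x)‖ ^ 2 := by
      rw [Submodule.starProjection_orthogonal_val, sub_sub_cancel]
    _ = RCLike.re ⟪(R ∘L Lᗮ.starProjection ∘L R) x, x⟫ := by
      rw [comp_apply, comp_apply, ← adjoint_inner_right, hR.adjoint_eq,
        Submodule.re_inner_starProjection_eq_normSq, Submodule.starProjection_apply,
        Submodule.coe_norm]

end

section

variable {𝕜 E : Type*} [RCLike 𝕜] [NormedAddCommGroup E] [InnerProductSpace 𝕜 E] [CompleteSpace E]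

theorem IsSelfAdjoint.eq_of_apply_eq {R : E →L[𝕜] E} (hR : IsSelfAdjoint R) {u v : E}
    (hu : u ∈ (LinearMap.range (R : E →ₗ[𝕜] E)).topologicalClosure)
    (hv : v ∈ (LinearMap.range (R : E →ₗ[𝕜] E)).topologicalClosure) (h : R u = R v) : u = v := by
  set K := LinearMap.range (R : E →ₗ[𝕜] E)
  have hker : u - v ∈ Kᗮ := by
    rw [orthogonal_range, hR.adjoint_eq]
    simp [h]
  have hcl : u - v ∈ Kᗮᗮ := by
    rw [Submodule.orthogonal_orthogonal_eq_closure]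
    exact Submodule.sub_mem _ hu hv
  rw [← sub_eq_zero, ← Submodule.mem_bot 𝕜, ← Submodule.inf_orthogonal_eq_bot Kᗮ]
  exact ⟨hker, hcl⟩

theorem exists_isIdempotentElem_range_eq_of_sup_eq_top {S N : Submodule 𝕜 E}
    (hS : IsClosed (S : Set E)) (hN : IsClosed (N : Set E)) (h : S ⊔ N = ⊤) :
    ∃ Q : E →L[𝕜] E, IsIdempotentElem Q ∧ LinearMap.range (Q : E →ₗ[𝕜] E) = S ∧
      ∀ x, x - Q x ∈ N := by
  have : CompleteSpace ↥(S ⊓ N) := (hS.inter hN).completeSpace_coe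
  set N' := (S ⊓ N)ᗮ ⊓ N
  have hcompl : IsCompl S N' := by
    constructor
    · rw [Submodule.disjoint_def]
      intro x hxS ⟨hx, hxN⟩
      exact (Submodule.orthogonal_disjoint (S ⊓ N)).le_bot ⟨⟨hxS, hxN⟩, hx⟩
    · rw [codisjoint_iff, ← h, ← Submodule.sup_orthogonal_inf_of_hasOrthogonalProjection
        (inf_le_right : S ⊓ N ≤ N), ← sup_assoc, sup_inf_self]
  have htop := Submodule.IsCompl.isTopCompl_of_isClosed hcompl hS
    ((Submodule.isClosed_orthogonal _).inter hN)
  refine ⟨S.projectionL N' htop, Submodule.isIdempotentElem_projectionL htop,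
    Submodule.range_projectionL htop, fun x => ?_⟩
  rw [← Submodule.projectionL_eq_self_sub_projectionL htop]
  exact (N'.projectionL_apply_mem htop.symm x).2

end

section

variable {E : Type*} [NormedAddCommGroup E] [InnerProductSpace ℂ E] [CompleteSpace E]
  {W Q : E →L[ℂ] E} {S : Submodule ℂ E}

theorem adjoint_comp_eq_comp_of_isSelfAdjoint (hW : IsSelfAdjoint W)
    (hWQ : IsSelfAdjoint (W ∘L Q)) : adjoint Q ∘L W = W ∘L Q := by
  simpa [adjoint_comp, hW.adjoint_eq] using hWQ.adjoint_eq

theorem adjoint_conj_eq_comp_of_isSelfAdjoint (hW : IsSelfAdjoint W) (hQ : IsIdempotentElem Q)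
    (hWQ : IsSelfAdjoint (W ∘L Q)) : adjoint Q ∘L W ∘L Q = W ∘L Q := by
  rw [← comp_assoc, adjoint_comp_eq_comp_of_isSelfAdjoint hW hWQ, comp_assoc, ← mul_def Q, hQ.eq]

theorem ContinuousLinearMap.IsPositive.comp_of_isIdempotentElem (hW : W.IsPositive)
    (hQ : IsIdempotentElem Q) (hWQ : IsSelfAdjoint (W ∘L Q)) : (W ∘L Q).IsPositive := by
  rw [← adjoint_conj_eq_comp_of_isSelfAdjoint hW.isSelfAdjoint hQ hWQ]
  exact hW.adjoint_conj Q

theorem IsSelfAdjoint.comp_one_sub (hW : IsSelfAdjoint W) (hWQ : IsSelfAdjoint (W ∘L Q)) :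
    IsSelfAdjoint (W ∘L (1 - Q)) := by
  rw [comp_sub, ← mul_def W 1, mul_one]
  exact hW.sub hWQ

theorem apply_sub_mem_orthogonal_of_compatible (hW : IsSelfAdjoint W) (hQ : IsIdempotentElem Q)
    (hQS : LinearMap.range (Q : E →ₗ[ℂ] E) = S) (hWQ : IsSelfAdjoint (W ∘L Q)) (x : E) :
    W (x - Q x) ∈ Sᗮ := by
  rw [Submodule.mem_orthogonal]
  intro s hs
  obtain ⟨y, rfl⟩ := hQS ▸ hs
  have hQQ : Q (Q x) = Q x := congr($hQ.eq x)
  calc ⟪Q y, W (x - Q x)⟫ = ⟪(W ∘L Q) y, x - Q x⟫ := (hW.isSymmetric _ _).symm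
    _ = ⟪y, (W ∘L Q) (x - Q x)⟫ := hWQ.isSymmetric _ _
    _ = 0 := by rw [comp_apply, map_sub, hQQ, sub_self, map_zero, inner_zero_right]

theorem isShorted_comp_one_sub (hW : W.IsPositive) (hQ : IsIdempotentElem Q)
    (hQS : LinearMap.range (Q : E →ₗ[ℂ] E) = S) (hWQ : IsSelfAdjoint (W ∘L Q)) :
    IsShorted W S (W ∘L (1 - Q)) := by
  have hWQ' := hW.isSelfAdjoint.comp_one_sub hWQ
  refine ⟨⟨hW.comp_of_isIdempotentElem hQ.one_sub hWQ', ?_, ?_⟩, fun X hX => ?_⟩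
  · rw [comp_sub, ← mul_def W 1, mul_one, sub_sub_cancel]
    exact hW.comp_of_isIdempotentElem hQ hWQ
  · rintro _ ⟨x, rfl⟩
    simpa using apply_sub_mem_orthogonal_of_compatible hW.isSelfAdjoint hQ hQS hWQ x
  have hXQ : X ∘L Q = 0 := ext fun x => apply_eq_zero_of_mem_mSet hX (hQS ▸ ⟨x, rfl⟩)
  have hQX : adjoint Q ∘L X = 0 := by
    simpa [adjoint_comp, hX.1.isSelfAdjoint.adjoint_eq] using congrArg adjoint hXQ
  have hXconj : adjoint (1 - Q) ∘L X ∘L (1 - Q) = X := by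
    rw [comp_sub, ← mul_def X 1, mul_one, hXQ, sub_zero, map_sub, sub_comp, hQX, sub_zero,
      ← star_eq_adjoint, star_one, ← mul_def, one_mul]
  change (W ∘L (1 - Q) - X).IsPositive
  rw [← adjoint_conj_eq_comp_of_isSelfAdjoint hW.isSelfAdjoint hQ.one_sub hWQ', ← hXconj,
    ← comp_sub, ← sub_comp]
  exact hX.2.1.adjoint_conj _

theorem compatible_iff_sup_comap_orthogonal_eq_top (hS : IsClosed (S : Set E))
    (hW : IsSelfAdjoint W) : Compatible W S ↔ S ⊔ Sᗮ.comap (W : E →ₗ[ℂ] E) = ⊤ := by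
  constructor
  · rintro ⟨Q, hQ, hQS, hWQ⟩
    exact Submodule.eq_top_iff'.mpr fun x => Submodule.mem_sup.mpr
      ⟨Q x, hQS ▸ ⟨x, rfl⟩, x - Q x, apply_sub_mem_orthogonal_of_compatible hW hQ hQS hWQ x,
        add_sub_cancel _ _⟩
  intro h
  obtain ⟨Q, hQ, hQS, hQN⟩ := exists_isIdempotentElem_range_eq_of_sup_eq_top hS
    ((Submodule.isClosed_orthogonal S).preimage W.continuous) h
  refine ⟨Q, hQ, hQS, ?_⟩
  have hWsymm : ∀ x y, ⟪W x, y⟫ = ⟪x, W y⟫ := hW.isSymmetric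
  have key (x y : E) : ⟪W (Q x), y⟫ = ⟪Q x, W (Q y)⟫ := by
    have hQx : Q x ∈ S := hQS ▸ LinearMap.mem_range_self _ x
    have h0 : ⟪Q x, W (y - Q y)⟫ = 0 := Submodule.inner_right_of_mem_orthogonal hQx (hQN y)
    rw [hWsymm, ← sub_add_cancel y (Q y), map_add, inner_add_right, sub_add_cancel, h0, zero_add]
  rw [isSelfAdjoint_iff_isSymmetric]
  intro x y
  change ⟪W (Q x), y⟫ = ⟪x, W (Q y)⟫
  rw [key, ← inner_conj_symm x, key, inner_conj_symm, hWsymm]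

theorem MinusLE.exists_eq_comp {A B : E →L[ℂ] E} (h : MinusLE A B) : ∃ G, A = B ∘L G := by
  obtain ⟨-, P, -, -, -, hP⟩ := h
  exact ⟨adjoint P, by simpa [adjoint_comp] using congrArg adjoint hP⟩

theorem minusLE_of_eq_comp {A B P : E →L[ℂ] E} (hA : IsSelfAdjoint A) (hB : IsSelfAdjoint B)
    (hP : IsIdempotentElem P) (h : A = P ∘L B) : MinusLE A B :=
  ⟨P, P, hP, hP, h, by rwa [hA.adjoint_eq, hB.adjoint_eq]⟩

theorem minusLE_of_compatible {T : E →L[ℂ] E} (hW : W.IsPositive) (hT : IsShorted W S T)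
    (h : Compatible W S) : MinusLE T W := by
  obtain ⟨Q, hQ, hQS, hWQ⟩ := h
  refine minusLE_of_eq_comp hT.1.1.isSelfAdjoint hW.isSelfAdjoint
    (IsIdempotentElem.star_iff.mpr hQ.one_sub) ?_
  rw [hT.unique (isShorted_comp_one_sub hW hQ hQS hWQ), star_eq_adjoint,
    adjoint_comp_eq_comp_of_isSelfAdjoint hW.isSelfAdjoint (hW.isSelfAdjoint.comp_one_sub hWQ)]

end

section

variable {E : Type*} [NormedAddCommGroup E] [InnerProductSpace ℂ E] [CompleteSpace E]
  {W R : E →L[ℂ] E} {S : Submodule ℂ E}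

theorem map_eq_closure_inter_range_of_sup_eq_top (hR : IsSelfAdjoint R) (hRW : R ∘L R = W)
    (h : S ⊔ Sᗮ.comap (W : E →ₗ[ℂ] E) = ⊤) :
    (S.map (R : E →ₗ[ℂ] E) : Set E) =
      closure (S.map (R : E →ₗ[ℂ] E) : Set E) ∩ Set.range R := by
  set L := S.map (R : E →ₗ[ℂ] E)
  refine subset_antisymm (Set.subset_inter subset_closure ?_) ?_
  · rintro _ ⟨s, -, rfl⟩
    exact ⟨s, rfl⟩
  rintro _ ⟨hcl, x, rfl⟩
  obtain ⟨s, hs, n, hn, rfl⟩ := Submodule.mem_sup.mp (h.symm ▸ Submodule.mem_top : x ∈ S ⊔ _)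
  have hRs : R s ∈ L := Submodule.mem_map_of_mem hs
  have hRn : R n ∈ Lᗮ := (apply_mem_orthogonal_map_iff hR hRW).mpr hn
  have hRn' : R n ∈ Lᗮᗮ := by
    rw [Submodule.orthogonal_orthogonal_eq_closure, ← add_sub_cancel_left (R s) (R n), ← map_add]
    exact L.topologicalClosure.sub_mem hcl (L.le_topologicalClosure hRs)
  have hRn0 : R n = 0 := by
    rw [← Submodule.mem_bot ℂ, ← Submodule.inf_orthogonal_eq_bot Lᗮ]
    exact ⟨hRn, hRn'⟩
  rw [map_add, hRn0, add_zero]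
  exact hRs

theorem sup_comap_orthogonal_eq_top_of_minusLE {T : E →L[ℂ] E} (hR : IsSelfAdjoint R)
    (hRW : R ∘L R = W) (hT : IsShorted W S T) (hTW : MinusLE T W)
    (hclosed : (S.map (R : E →ₗ[ℂ] E) : Set E) =
      closure (S.map (R : E →ₗ[ℂ] E) : Set E) ∩ Set.range R) :
    S ⊔ Sᗮ.comap (W : E →ₗ[ℂ] E) = ⊤ := by
  obtain ⟨G, hG⟩ := hTW.exists_eq_comp
  have hT₀ := hT.unique (isShorted_comp_starProjection_orthogonal_map hR hRW)
  set L := S.map (R : E →ₗ[ℂ] E)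
  have hL : Lᗮᗮ ≤ (LinearMap.range (R : E →ₗ[ℂ] E)).topologicalClosure := by
    rw [Submodule.orthogonal_orthogonal_eq_closure]
    exact Submodule.topologicalClosure_mono LinearMap.map_le_range
  refine Submodule.eq_top_iff'.mpr fun x => ?_
  have hproj : Lᗮᗮ.starProjection (R x) = R (x - G x) := by
    refine hR.eq_of_apply_eq (hL (Submodule.starProjection_apply_mem _ _))
      (Submodule.le_topologicalClosure _ (LinearMap.mem_range_self _ _)) ?_
    calc R (Lᗮᗮ.starProjection (R x)) = R (R x) - T x := by
          rw [hT₀, Submodule.starProjection_orthogonal_val, map_sub]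
          rfl
      _ = R (R (x - G x)) := by
          rw [hG, ← hRW, map_sub, map_sub]
          rfl
  obtain ⟨s, hs, hRs⟩ : Lᗮᗮ.starProjection (R x) ∈ L := by
    rw [← SetLike.mem_coe, hclosed]
    refine ⟨?_, x - G x, hproj.symm⟩
    rw [← Submodule.topologicalClosure_coe, ← Submodule.orthogonal_orthogonal_eq_closure]
    exact Submodule.starProjection_apply_mem _ _
  refine Submodule.mem_sup.mpr ⟨s, hs, x - s, ?_, add_sub_cancel _ _⟩
  rw [Submodule.mem_comap, coe_coe, ← apply_mem_orthogonal_map_iff hR hRW, map_sub,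
    show R s = _ from hRs, Submodule.starProjection_orthogonal_val, sub_sub_cancel]
  exact Submodule.starProjection_apply_mem _ _

end

/-- `(W,S)` is compatible iff `T ⁻≤ W` and `W^{1/2}(S)` is closed in
`range W^{1/2}`, where `R = W^{1/2}` is the unique positive square root of `W`. -/
theorem stmt4 (W T R : H →L[ℂ] H) (S : Submodule ℂ H) (hS : IsClosed (S : Set H))
    (hW : W.IsPositive) (hT : IsShorted W S T)
    (hR : R.IsPositive) (hR2 : R ∘L R = W) :
    Compatible W S ↔
      MinusLE T W ∧
        (S.map (R : H →ₗ[ℂ] H) : Set H) = closure (S.map (R : H →ₗ[ℂ] H) : Set H) ∩ Set.range R := by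
  have hdecomp := compatible_iff_sup_comap_orthogonal_eq_top hS hW.isSelfAdjoint
  constructor
  · intro h
    exact ⟨minusLE_of_compatible hW hT h,
      map_eq_closure_inter_range_of_sup_eq_top hR.isSelfAdjoint hR2 (hdecomp.mp h)⟩
  · rintro ⟨hTW, hclosed⟩
    exact hdecomp.mpr (sup_comap_orthogonal_eq_top_of_minusLE hR.isSelfAdjoint hR2 hT hTW hclosed)
end
end

section
/- Let W ∈ L(H) be a positive operator, A ∈ L(H) an operator with closed range and B ∈ L(H). Then the following conditions are equivalent: (i) there exists X₀ ∈ L(H) that is a W-inverse of A in R(B), i.e. ⟨W(AX₀x − Bx), AX₀x − Bx⟩ ≤ ⟨W(Az − Bx), Az − Bx⟩ for all x, z ∈ H; (ii) range B ⊆ range A + W^{-1}((range A)^⊥); (iii) there exists X ∈ L(H) with A*W(AX − B) = 0. -/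
open ContinuousLinearMap
open scoped ComplexInnerProductSpace

noncomputable section

variable {H : Type*} [NormedAddCommGroup H] [InnerProductSpace ℂ H] [CompleteSpace H]

/-! Writing `W = S* S`, the functional in the definition of a `W`-inverse is `‖S (A z - B x)‖²`,
so `W`-inverses of `A` in `R(B)` are pointwise unweighted least-squares solutions for `S A`, which
are characterized by the normal equation `A* W (A X - B) = 0`. With `T = A* W`, whose kernel is
`W⁻¹((range A)^⊥)`, the range condition says `range (T B) ⊆ range (T A)`, which by Douglas'
lemma means that `T A X = T B` has a bounded solution `X`. -/

namespace ContinuousLinearMap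

section Factorization

variable {𝕜 E F G : Type*} [RCLike 𝕜] [NormedAddCommGroup E] [NormedAddCommGroup F]
  [NormedAddCommGroup G] [NormedSpace 𝕜 F] [NormedSpace 𝕜 G] [CompleteSpace G]

theorem exists_comp_eq_of_injective_of_range_le [NormedSpace 𝕜 E] [CompleteSpace E]
    (T : E →L[𝕜] F) (hT : Function.Injective T) (C : G →L[𝕜] F)
    (h : C.range ≤ T.range) : ∃ X : G →L[𝕜] E, T ∘L X = C := by
  let e := LinearEquiv.ofInjective (T : E →ₗ[𝕜] F) hT
  let g : G →ₗ[𝕜] E := e.symm.toLinearMap ∘ₗ (C : G →ₗ[𝕜] F).codRestrict _ fun x => h ⟨x, rfl⟩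
  have hTg : ∀ x, T (g x) = C x := fun x =>
    congrArg Subtype.val (e.apply_symm_apply ⟨C x, h ⟨x, rfl⟩⟩)
  have hgraph : (g.graph : Set (G × E)) = {p | T p.2 = C p.1} := by
    ext ⟨x, y⟩
    simp only [SetLike.mem_coe, LinearMap.mem_graph_iff, Set.mem_ofPred_eq, ← hTg x]
    exact hT.eq_iff.symm
  have hclosed : IsClosed (g.graph : Set (G × E)) :=
    hgraph ▸ isClosed_eq (T.continuous.comp continuous_snd) (C.continuous.comp continuous_fst)
  exact ⟨ofIsClosedGraph hclosed, ext hTg⟩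

theorem exists_comp_eq_iff_range_le [InnerProductSpace 𝕜 E] [CompleteSpace E]
    (T : E →L[𝕜] F) (C : G →L[𝕜] F) : (∃ X : G →L[𝕜] E, T ∘L X = C) ↔ C.range ≤ T.range := by
  refine ⟨fun ⟨X, hX⟩ => hX ▸ LinearMap.range_comp_le_range _ _, fun h => ?_⟩
  set K := T.ker
  have hinj : Function.Injective (T ∘L Kᗮ.subtypeL) := by
    intro a b hab
    have hK : (a - b : E) ∈ K := by simpa [K, sub_eq_zero] using hab
    exact sub_eq_zero.mp <| Subtype.ext <|
      Submodule.disjoint_def.mp (Submodule.orthogonal_disjoint K) _ hK (a - b).2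
  have hrange : (T ∘L Kᗮ.subtypeL).range = T.range := by
    rw [toLinearMap_comp, LinearMap.range_comp, Submodule.toLinearMap_subtypeL,
      Submodule.range_subtype, Submodule.map_eq_range_iff]
    exact K.isCompl_orthogonal.symm.codisjoint
  obtain ⟨X, hX⟩ := exists_comp_eq_of_injective_of_range_le _ hinj C (hrange ▸ h)
  exact ⟨Kᗮ.subtypeL ∘L X, by rw [← hX]; rfl⟩

end Factorization

section WeightedLeastSquares

variable {E F G : Type*} [NormedAddCommGroup E] [InnerProductSpace ℂ E] [CompleteSpace E]
  [NormedAddCommGroup F] [InnerProductSpace ℂ F] [CompleteSpace F]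
  [NormedAddCommGroup G] [InnerProductSpace ℂ G] [CompleteSpace G]

theorem IsPositive.exists_eq_adjoint_comp_self {W : F →L[ℂ] F} (hW : W.IsPositive) :
    ∃ S : F →L[ℂ] F, W = adjoint S ∘L S :=
  CStarAlgebra.nonneg_iff_eq_star_mul_self.mp ((nonneg_iff_isPositive W).mpr hW)

theorem reApplyInnerSelf_adjoint_comp_self (S : F →L[ℂ] G) (v : F) :
    (adjoint S ∘L S).reApplyInnerSelf v = ‖S v‖ ^ 2 := by
  rw [reApplyInnerSelf_apply, comp_apply, adjoint_inner_left, inner_self_eq_norm_sq]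

theorem IsPositive.forall_reApplyInnerSelf_le_iff {W : F →L[ℂ] F} (hW : W.IsPositive)
    (A : E →L[ℂ] F) (y : F) (x : E) :
    (∀ z, W.reApplyInnerSelf (A x - y) ≤ W.reApplyInnerSelf (A z - y)) ↔
      adjoint A (W (A x - y)) = 0 := by
  obtain ⟨S, rfl⟩ := hW.exists_eq_adjoint_comp_self
  have key := (S ∘L A).forall_norm_sub_apply_le_iff_adjoint_apply_sub_eq_zero (S y) x
  simp only [reApplyInnerSelf_adjoint_comp_self, adjoint_comp, comp_apply, ← map_sub] at key ⊢
  simp only [← neg_sub _ y, map_neg, norm_neg, neg_eq_zero] at key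
  simpa only [sq_le_sq₀ (norm_nonneg _) (norm_nonneg _)] using key

end WeightedLeastSquares

section RangeInclusion

variable {𝕜 E F G : Type*} [RCLike 𝕜] [NormedAddCommGroup E] [InnerProductSpace 𝕜 E]
  [CompleteSpace E] [NormedAddCommGroup F] [InnerProductSpace 𝕜 F] [CompleteSpace F]
  [NormedAddCommGroup G] [NormedSpace 𝕜 G]

theorem range_le_sup_comap_orthogonal_range_iff (W : F →L[𝕜] F) (A : E →L[𝕜] F)
    (B : G →L[𝕜] F) :
    B.range ≤ A.range ⊔ (A.range)ᗮ.comap (W : F →ₗ[𝕜] F) ↔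
      (adjoint A ∘L W ∘L B).range ≤ (adjoint A ∘L W ∘L A).range := by
  have hker : (A.range)ᗮ.comap (W : F →ₗ[𝕜] F) = (adjoint A ∘L W).ker := by
    rw [orthogonal_range, toLinearMap_comp, LinearMap.ker_comp]
  rw [hker, ← LinearMap.map_le_map_iff, ← LinearMap.range_comp, ← LinearMap.range_comp]
  rfl

end RangeInclusion

end ContinuousLinearMap

theorem wInverseIn_iff {W A B X : H →L[ℂ] H} (hW : W.IsPositive) :
    WInverseIn W A B X ↔ adjoint A ∘L (W ∘L (A ∘L X - B)) = 0 := by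
  simp only [WInverseIn, ContinuousLinearMap.ext_iff, comp_apply, sub_apply, zero_apply]
  exact forall_congr' fun x => hW.forall_reApplyInnerSelf_le_iff A (B x) (X x)

theorem stmt18_general (W A B : H →L[ℂ] H) (hW : W.IsPositive) :
    [∃ X₀ : H →L[ℂ] H, WInverseIn W A B X₀,
     LinearMap.range (B : H →ₗ[ℂ] H) ≤ LinearMap.range (A : H →ₗ[ℂ] H) ⊔ Submodule.comap (W : H →ₗ[ℂ] H) (LinearMap.range (A : H →ₗ[ℂ] H))ᗮ,
     ∃ X : H →L[ℂ] H, adjoint A ∘L (W ∘L (A ∘L X - B)) = 0].TFAE := by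
  tfae_have 1 ↔ 3 := exists_congr fun _ => wInverseIn_iff hW
  tfae_have 2 ↔ 3 := by
    rw [range_le_sup_comap_orthogonal_range_iff, ← exists_comp_eq_iff_range_le]
    simp only [comp_sub, sub_eq_zero, comp_assoc]
  tfae_finish

/-- equivalence of (i) `A` admits a `W`-inverse in `R(B)`;
(ii) `range B ⊆ range A + W⁻¹((range A)^⊥)`; (iii) the normal equation `A*W(AX - B) = 0`
has a bounded solution. -/
theorem stmt18 (W A B : H →L[ℂ] H) (hW : W.IsPositive)
    (hA : IsClosed (LinearMap.range (A : H →ₗ[ℂ] H) : Set H)) :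
    [∃ X₀ : H →L[ℂ] H, WInverseIn W A B X₀,
     LinearMap.range (B : H →ₗ[ℂ] H) ≤ LinearMap.range (A : H →ₗ[ℂ] H) ⊔ Submodule.comap (W : H →ₗ[ℂ] H) (LinearMap.range (A : H →ₗ[ℂ] H))ᗮ,
     ∃ X : H →L[ℂ] H, adjoint A ∘L (W ∘L (A ∘L X - B)) = 0].TFAE :=
  stmt18_general W A B hW
end
end

section
/- Let W ∈ L(H) be a positive operator and A ∈ L(H) an operator with closed range such that the pair (W, range A) is compatible, and let T be the shorted operator of W to range A. Then for X₀ ∈ L(H) the following conditions are equivalent: (i) X₀ is a W-inverse of A, i.e. ⟨W(AX₀x − x), AX₀x − x⟩ ≤ ⟨W(Az − x), Az − x⟩ for all x, z ∈ H; (ii) (AX₀ − I)*W(AX₀ − I) = T and T ≤ (AX − I)*W(AX − I) in the Loewner order for every X ∈ L(H); (iii) A*W(AX₀ − I) = 0. -/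
/-! For each `x`, condition (i) says that `b = A X₀ x - x` minimises `z ↦ re ⟪W (b + A z), b + A z⟫`;
expanding this quadratic shows that it is the normal equation `A* W b = 0`, i.e. (iii).
Under (iii), the forms `S(X) = (AX - I)* W (AX - I)` satisfy
`S(X) = S(X₀) + (A (X - X₀))* W A (X - X₀)`, so `S(X₀)` is the least of them. Moreover `S(X₀)`
lies in `M(W, R(A))`: it is below `S(0) = W`, and `A* S(X₀) = 0`. It also dominates every
`Y ∈ M(W, R(A))`, because such a `Y` vanishes on `R(A)`, so that
`Y = (AX₀ - I)* Y (AX₀ - I) ≤ (AX₀ - I)* W (AX₀ - I)`. Hence `S(X₀)` is the shorted operator.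
Conversely, testing the minimality of `S(X₀)` against operators `X` with `X x = z` gives (i). -/

open ContinuousLinearMap
open scoped ComplexInnerProductSpace

noncomputable section

variable {H : Type*} [NormedAddCommGroup H] [InnerProductSpace ℂ H] [CompleteSpace H]

open RCLike
open scoped InnerProductSpace

section WeightedLeastSquares

variable {𝕜 E F : Type*} [RCLike 𝕜] [NormedAddCommGroup E] [InnerProductSpace 𝕜 E]
  [NormedAddCommGroup F] [InnerProductSpace 𝕜 F]

theorem LinearMap.IsSymmetric.re_inner_map_add {W : F →ₗ[𝕜] F} (hW : W.IsSymmetric) (u v : F) :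
    re ⟪W (u + v), u + v⟫_𝕜 = re ⟪W u, u⟫_𝕜 + 2 * re ⟪W u, v⟫_𝕜 + re ⟪W v, v⟫_𝕜 := by
  have : re ⟪W v, u⟫_𝕜 = re ⟪W u, v⟫_𝕜 := by
    rw [hW, ← inner_conj_symm, conj_re]
  simp only [map_add, inner_add_left, inner_add_right, this]
  ring

theorem exists_continuousLinearMap_apply_eq {x : E} (hx : x ≠ 0) (z : F) :
    ∃ X : E →L[𝕜] F, X x = z := by
  obtain ⟨f, hf⟩ := SeparatingDual.exists_eq_one (R := 𝕜) hx
  exact ⟨f.smulRight z, by simp [hf]⟩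

variable [CompleteSpace F]

def weightedResidual (W : F →L[𝕜] F) (A : E →L[𝕜] F) (X : F →L[𝕜] E) : F →L[𝕜] F :=
  adjoint (A ∘L X - 1) ∘L (W ∘L (A ∘L X - 1))

@[simp]
theorem weightedResidual_zero (W : F →L[𝕜] F) (A : E →L[𝕜] F) : weightedResidual W A 0 = W := by
  simp only [weightedResidual, comp_zero, zero_sub, map_neg, adjoint_one, neg_comp, comp_neg,
    neg_neg]
  rfl

theorem inner_weightedResidual_apply (W : F →L[𝕜] F) (A : E →L[𝕜] F) (X : F →L[𝕜] E) (x : F) :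
    ⟪weightedResidual W A X x, x⟫_𝕜 = ⟪W (A (X x) - x), A (X x) - x⟫_𝕜 := by
  rw [weightedResidual, comp_apply, comp_apply, adjoint_inner_left]
  simp

theorem adjoint_conj_residual_eq_self {X : F →L[𝕜] F} (hX : IsSelfAdjoint X) {A : E →L[𝕜] F}
    (hXA : X ∘L A = 0) (X₀ : F →L[𝕜] E) :
    adjoint (A ∘L X₀ - 1) ∘L (X ∘L (A ∘L X₀ - 1)) = X := by
  have hXB : X ∘L (A ∘L X₀ - 1) = -X := by
    rw [comp_sub, ← comp_assoc, hXA, zero_comp, one_def, comp_id, zero_sub]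
  rw [hXB, comp_neg, ← hX.adjoint_eq, ← adjoint_comp, hX.adjoint_eq, hXB, map_neg, neg_neg,
    hX.adjoint_eq]

variable [CompleteSpace E]

theorem ContinuousLinearMap.range_le_orthogonal_range_iff {G : Type*} [NormedAddCommGroup G]
    [InnerProductSpace 𝕜 G] (A : E →L[𝕜] F) (X : G →L[𝕜] F) :
    X.range ≤ A.rangeᗮ ↔ adjoint A ∘L X = 0 := by
  rw [orthogonal_range, LinearMap.range_le_ker_iff, ← toLinearMap_comp, ← toLinearMap_zero,
    coe_inj]

theorem ContinuousLinearMap.IsPositive.forall_re_inner_le_add_iff {W : F →L[𝕜] F}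
    (hW : W.IsPositive) (A : E →L[𝕜] F) (b : F) :
    (∀ z, re ⟪W b, b⟫_𝕜 ≤ re ⟪W (b + A z), b + A z⟫_𝕜) ↔ adjoint A (W b) = 0 := by
  have expand : ∀ z, re ⟪W (b + A z), b + A z⟫_𝕜 =
      re ⟪W b, b⟫_𝕜 + 2 * re ⟪adjoint A (W b), z⟫_𝕜 + re ⟪W (A z), A z⟫_𝕜 := fun z => by
    rw [adjoint_inner_left]
    exact hW.isSymmetric.re_inner_map_add b (A z)
  simp only [expand]
  constructor
  · intro h
    set v := adjoint A (W b)
    -- along `z = t • v` the excess is a quadratic in `t` without constant term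
    have hquad : ∀ t : ℝ, 0 ≤ re ⟪W (A v), A v⟫_𝕜 * (t * t) + 2 * ‖v‖ ^ 2 * t + 0 := fun t => by
      have := h ((t : 𝕜) • v)
      simp only [map_smul, inner_smul_left, inner_smul_right, inner_self_eq_norm_sq_to_K,
        conj_ofReal, re_ofReal_mul, ← ofReal_pow, ofReal_re] at this
      linarith
    have h0 : (2 * ‖v‖ ^ 2) ^ 2 ≤ 0 := by simpa [discrim] using discrim_le_zero hquad
    simpa using h0
  · intro h z
    rw [h, inner_zero_left, map_zero]
    linarith [hW.re_inner_nonneg_left (A z)]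

theorem weightedResidual_eq_add {W : F →L[𝕜] F} (hW : IsSelfAdjoint W) {A : E →L[𝕜] F}
    {X₀ : F →L[𝕜] E} (h : adjoint A ∘L (W ∘L (A ∘L X₀ - 1)) = 0) (X : F →L[𝕜] E) :
    weightedResidual W A X =
      weightedResidual W A X₀ + adjoint (A ∘L (X - X₀)) ∘L (W ∘L (A ∘L (X - X₀))) := by
  have h' : adjoint (A ∘L X₀ - 1) ∘L (W ∘L A) = 0 := by
    simpa [adjoint_comp, hW.adjoint_eq, comp_assoc] using congrArg adjoint h
  have hsplit : A ∘L X - 1 = (A ∘L X₀ - 1) + A ∘L (X - X₀) := by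
    rw [comp_sub]; abel
  have hcross₁ : adjoint (A ∘L (X - X₀)) ∘L (W ∘L (A ∘L X₀ - 1)) = 0 := by
    rw [adjoint_comp, comp_assoc, h, comp_zero]
  have hcross₂ : adjoint (A ∘L X₀ - 1) ∘L (W ∘L (A ∘L (X - X₀))) = 0 := by
    rw [← comp_assoc W, ← comp_assoc, h', zero_comp]
  simp only [weightedResidual, hsplit, map_add, add_comp, comp_add, hcross₁, hcross₂]
  abel

theorem weightedResidual_le {W : F →L[𝕜] F} (hW : W.IsPositive) {A : E →L[𝕜] F}
    {X₀ : F →L[𝕜] E} (h : adjoint A ∘L (W ∘L (A ∘L X₀ - 1)) = 0) (X : F →L[𝕜] E) :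
    weightedResidual W A X₀ ≤ weightedResidual W A X := by
  rw [le_def, weightedResidual_eq_add hW.isSelfAdjoint h X, add_sub_cancel_left]
  exact hW.adjoint_conj _

theorem adjoint_comp_weightedResidual {W : F →L[𝕜] F} {A : E →L[𝕜] F}
    {X₀ : F →L[𝕜] E} (h : adjoint A ∘L (W ∘L (A ∘L X₀ - 1)) = 0) :
    adjoint A ∘L weightedResidual W A X₀ = 0 := by
  have : (A ∘L X₀ - 1) ∘L A = A ∘L (X₀ ∘L A - 1) := by
    simp only [sub_comp, comp_sub, comp_assoc, one_def, id_comp, comp_id]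
  rw [weightedResidual, ← comp_assoc, ← adjoint_comp, this, adjoint_comp, comp_assoc, h, comp_zero]

end WeightedLeastSquares

section ShortedOperator

variable {W : H →L[ℂ] H}

theorem wInverseIn_one_iff (hW : W.IsPositive) (A X₀ : H →L[ℂ] H) :
    WInverseIn W A 1 X₀ ↔ adjoint A ∘L (W ∘L (A ∘L X₀ - 1)) = 0 := by
  simp only [WInverseIn, ContinuousLinearMap.ext_iff, comp_apply, sub_apply, zero_apply,
    one_apply_eq_self]
  refine forall_congr' fun x => ?_
  rw [← hW.forall_re_inner_le_add_iff A]
  have hshift : ∀ z, A (X₀ x) - x + A z = A (X₀ x + z) - x := fun z => by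
    rw [map_add]; abel
  simp only [hshift]
  constructor
  · exact fun h z => h _
  · intro h z
    have := h (z - X₀ x)
    rw [add_sub_cancel] at this
    exact this

theorem weightedResidual_mem_mSet (hW : W.IsPositive) {A X₀ : H →L[ℂ] H}
    (h : adjoint A ∘L (W ∘L (A ∘L X₀ - 1)) = 0) :
    weightedResidual W A X₀ ∈ MSet W A.range := by
  refine ⟨hW.adjoint_conj _, ?_, ?_⟩
  · have := weightedResidual_le hW h 0
    rwa [weightedResidual_zero] at this
  · exact (range_le_orthogonal_range_iff A _).mpr (adjoint_comp_weightedResidual h)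

theorem le_weightedResidual_of_mem_mSet {A X : H →L[ℂ] H} (hX : X ∈ MSet W A.range)
    (X₀ : H →L[ℂ] H) : X ≤ weightedResidual W A X₀ := by
  obtain ⟨hXpos, hWX, hXrange⟩ := hX
  have hXA : X ∘L A = 0 := by
    have := congrArg adjoint ((range_le_orthogonal_range_iff A X).mp hXrange)
    rwa [adjoint_comp, adjoint_adjoint, hXpos.isSelfAdjoint.adjoint_eq, map_zero] at this
  rw [le_def, weightedResidual, ← adjoint_conj_residual_eq_self hXpos.isSelfAdjoint hXA X₀,
    ← comp_sub, ← sub_comp]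
  exact hWX.adjoint_conj _

theorem wInverseIn_of_forall_weightedResidual_le (hW : W.IsPositive) {A X₀ : H →L[ℂ] H}
    (h : ∀ X, weightedResidual W A X₀ ≤ weightedResidual W A X) : WInverseIn W A 1 X₀ := by
  intro x z
  rcases eq_or_ne x 0 with rfl | hx
  · simpa using hW.re_inner_nonneg_left (A z)
  obtain ⟨X, rfl⟩ := exists_continuousLinearMap_apply_eq (𝕜 := ℂ) hx z
  have := (h X).re_inner_nonneg_left x
  rw [sub_apply, inner_sub_left, map_sub, inner_weightedResidual_apply,
    inner_weightedResidual_apply, sub_nonneg] at this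
  simpa only [one_apply_eq_self, re_to_complex] using this

end ShortedOperator

theorem stmt19_general (W A T X₀ : H →L[ℂ] H) (hW : W.IsPositive)
    (hT : IsShorted W (LinearMap.range (A : H →ₗ[ℂ] H)) T) :
    [WInverseIn W A 1 X₀,
     adjoint (A ∘L X₀ - 1) ∘L (W ∘L (A ∘L X₀ - 1)) = T ∧
       ∀ X : H →L[ℂ] H,
         ((adjoint (A ∘L X - 1) ∘L (W ∘L (A ∘L X - 1))) - T).IsPositive,
     adjoint A ∘L (W ∘L (A ∘L X₀ - 1)) = 0].TFAE := by
  tfae_have 1 ↔ 3 := wInverseIn_one_iff hW A X₀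
  tfae_have 3 → 2 := fun h => by
    have hT₀ : weightedResidual W A X₀ = T :=
      le_antisymm (hT.2 _ (weightedResidual_mem_mSet hW h))
        (le_weightedResidual_of_mem_mSet hT.1 X₀)
    exact ⟨hT₀, fun X => hT₀ ▸ weightedResidual_le hW h X⟩
  tfae_have 2 → 1 := fun ⟨hT₀, hmin⟩ =>
    wInverseIn_of_forall_weightedResidual_le hW fun X => (le_of_eq hT₀).trans (hmin X)
  tfae_finish

/-- if `(W, range A)` is compatible, then for `X₀` the conditions
(i) `X₀` is a `W`-inverse of `A`; (ii) `(AX₀ - I)* W (AX₀ - I) = T` and `T` is a Loewner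
lower bound of `{(AX - I)* W (AX - I)}`; (iii) `A*W(AX₀ - I) = 0`, are equivalent. -/
theorem stmt19 (W A T X₀ : H →L[ℂ] H) (hW : W.IsPositive)
    (hA : IsClosed (LinearMap.range (A : H →ₗ[ℂ] H) : Set H))
    (hcomp : Compatible W (LinearMap.range (A : H →ₗ[ℂ] H)))
    (hT : IsShorted W (LinearMap.range (A : H →ₗ[ℂ] H)) T) :
    [WInverseIn W A 1 X₀,
     adjoint (A ∘L X₀ - 1) ∘L (W ∘L (A ∘L X₀ - 1)) = T ∧
       ∀ X : H →L[ℂ] H,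
         ((adjoint (A ∘L X - 1) ∘L (W ∘L (A ∘L X - 1))) - T).IsPositive,
     adjoint A ∘L (W ∘L (A ∘L X₀ - 1)) = 0].TFAE :=
  stmt19_general W A T X₀ hW hT
end
end
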